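/- arXiv:1109.1690 — 6 statements merged into one kernel-verified Lean document; each statement's English description precedes it below -/
import Mathlib

section
/- For every ψ ∈ H with Q_⊥ψ = 0, the function x ↦ ‖Q_xψ‖² is superadditive on B: for all x, y ∈ B with x ⊓ y = ⊥ one has ‖Q_xψ‖² + ‖Q_yψ‖² ≤ ‖Q_{x⊔y}ψ‖². -/
/-!
For symmetric projections `P`, `R` with `P R φ = 0`, the vectors `P φ` and `R φ` are orthogonal,
so `v = P φ + R φ` has `‖v‖² = ‖P φ‖² + ‖R φ‖² = re ⟪v, φ⟫ ≤ ‖v‖ ‖φ‖` by Cauchy–Schwarz,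
whence `‖v‖ ≤ ‖φ‖`. Apply this to `φ = Q_{x⊔y} ψ`, `P = Q_x`, `R = Q_y`: these act on `φ` as on `ψ`,
and `Q_x Q_y φ = Q_⊥ ψ = 0`.
-/

open RCLike

namespace LinearMap.IsSymmetricProjection

variable {𝕜 E : Type*} [RCLike 𝕜] [NormedAddCommGroup E] [InnerProductSpace 𝕜 E]
  {P R : E →ₗ[𝕜] E}

theorem re_inner_apply_self (hP : P.IsSymmetricProjection) (x : E) :
    re (inner 𝕜 (P x) x) = ‖P x‖ ^ 2 := by
  have hPP : P (P x) = P x := by rw [← Module.End.mul_apply, hP.isIdempotentElem.eq]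
  conv_lhs => rw [← hPP, hP.isSymmetric, inner_self_eq_norm_sq]

theorem norm_sq_add_norm_sq_le (hP : P.IsSymmetricProjection) (hR : R.IsSymmetricProjection)
    {x : E} (hPR : P (R x) = 0) : ‖P x‖ ^ 2 + ‖R x‖ ^ 2 ≤ ‖x‖ ^ 2 := by
  set v := P x + R x
  have horth : inner 𝕜 (P x) (R x) = 0 := by rw [hP.isSymmetric, hPR, inner_zero_right]
  have hnorm : ‖v‖ ^ 2 = ‖P x‖ ^ 2 + ‖R x‖ ^ 2 := by
    rw [sq, sq, sq, norm_add_sq_eq_norm_sq_add_norm_sq_of_inner_eq_zero _ _ horth]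
  have hinner : re (inner 𝕜 v x) = ‖v‖ ^ 2 := by
    rw [inner_add_left, map_add, hP.re_inner_apply_self, hR.re_inner_apply_self, hnorm]
  have hle : ‖v‖ ≤ ‖x‖ := by
    have := hinner ▸ re_inner_le_norm v x
    nlinarith [norm_nonneg v, norm_nonneg x]
  rw [← hnorm]
  gcongr

end LinearMap.IsSymmetricProjection

/-- **Corollary 1a7.** For `ψ` with `Q_⊥ψ = 0`, the function `x ↦ ‖Q_xψ‖²` is
superadditive: `‖Q_xψ‖² + ‖Q_yψ‖² ≤ ‖Q_{x⊔y}ψ‖²` whenever `x ⊓ y = ⊥`. -/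
theorem stmt_4
    {B : Type*} [BooleanAlgebra B]
    {H : Type*} [NormedAddCommGroup H] [InnerProductSpace ℝ H] [CompleteSpace H]
    (Q : B → (H →L[ℝ] H))
    (hQproj : ∀ x : B, IsSelfAdjoint (Q x))
    (hQidem : ∀ x : B, (Q x).comp (Q x) = Q x)
    (hQ : ∀ x y : B, ∀ ψ : H, Q x (Q y ψ) = Q (x ⊓ y) ψ)
    (ψ : H) (hψ : Q ⊥ ψ = 0) :
    ∀ x y : B, x ⊓ y = ⊥ → ‖Q x ψ‖ ^ 2 + ‖Q y ψ‖ ^ 2 ≤ ‖Q (x ⊔ y) ψ‖ ^ 2 := by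
  intro x y hxy
  have hproj (z : B) : (Q z : H →ₗ[ℝ] H).IsSymmetricProjection :=
    ContinuousLinearMap.IsStarProjection.isSymmetricProjection ⟨hQidem z, hQproj z⟩
  have hx : Q x (Q (x ⊔ y) ψ) = Q x ψ := by rw [hQ, inf_sup_self]
  have hy : Q y (Q (x ⊔ y) ψ) = Q y ψ := by rw [hQ, sup_comm, inf_sup_self]
  have hxyψ : Q x (Q y (Q (x ⊔ y) ψ)) = 0 := by rw [hy, hQ, hxy, hψ]
  simpa only [ContinuousLinearMap.coe_coe, hx, hy] using
    (hproj x).norm_sq_add_norm_sq_le (hproj y) hxyψ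
end

section
/- Let Σ₁, Σ₂ ⊆ Σ be sub-σ-algebras. Then the von Neumann algebra generated by {M_g : g bounded Σ₁-measurable} ∪ {M_g : g bounded Σ₂-measurable} is equal to the von Neumann algebra generated by {M_g : g bounded (Σ₁ ⊔ Σ₂)-measurable}, where Σ₁ ⊔ Σ₂ is the σ-algebra generated by Σ₁ ∪ Σ₂. -/
open MeasureTheory

/-- The von Neumann algebra generated by a set of bounded operators: the double commutant
of the star-subalgebra it generates. -/
noncomputable def vnGen {H : Type*} [NormedAddCommGroup H] [InnerProductSpace ℂ H]
    [CompleteSpace H] (s : Set (H →L[ℂ] H)) : Set (H →L[ℂ] H) :=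
  Set.centralizer (Set.centralizer
    ((StarAlgebra.adjoin ℂ s : StarSubalgebra ℂ (H →L[ℂ] H)) : Set (H →L[ℂ] H)))

/-- The set of multiplication operators on `L²(μ; ℂ)` by bounded `m`-measurable functions. -/
def mulOps {S : Type*} {_mS : MeasurableSpace S} (μ : Measure S) (m : MeasurableSpace S) :
    Set (Lp ℂ 2 μ →L[ℂ] Lp ℂ 2 μ) :=
  {T | ∃ g : S → ℂ, Measurable[m] g ∧ (∃ C : ℝ, ∀ s, ‖g s‖ ≤ C) ∧
    ∀ f : Lp ℂ 2 μ, (T f : S → ℂ) =ᵐ[μ] fun s => g s * f s}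

/-!
Write `L(m)` for the multiplication operators by bounded `m`-measurable functions. Every set
`L(m)` is closed under adjoints, so the von Neumann algebra it generates is the double commutant
of `L(m)` itself, and it suffices to show that `L(m₁) ∪ L(m₂)` and `L(m₁ ⊔ m₂)` have the same
commutant. Fix `T` in the commutant of `L(m₁) ∪ L(m₂)`. The functions `g` whose multiplication
operator commutes with `T` form an algebra that is closed under bounded pointwise limits (by
dominated convergence in `L²`). Hence the sets whose indicator is such a function form a
σ-algebra containing `m₁` and `m₂`, so it contains `m₁ ⊔ m₂`; approximating a bounded
`(m₁ ⊔ m₂)`-measurable function by uniformly bounded simple functions finishes the proof.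
-/

open Filter Topology ComplexConjugate
open scoped ENNReal

theorem StarAlgebra.centralizer_coe_adjoin {R A : Type*} [CommSemiring R] [StarRing R]
    [Semiring A] [StarRing A] [Algebra R A] [StarModule R A] (s : Set A) :
    Set.centralizer (adjoin R s : Set A) = Set.centralizer (s ∪ star s) := by
  refine (Set.centralizer_subset (Set.union_subset (subset_adjoin R s)
    (star_subset_adjoin R s))).antisymm ?_
  rw [← Set.centralizer_centralizer_centralizer (s ∪ star s),
    ← StarSubalgebra.coe_centralizer_centralizer R s]
  exact Set.centralizer_subset (adjoin_le_centralizer_centralizer R s)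

theorem ContinuousLinearMap.commute_of_tendsto {R E : Type*} [Semiring R] [TopologicalSpace E]
    [T2Space E] [AddCommMonoid E] [Module R E] {M : ℕ → E →L[R] E} {N T : E →L[R] E}
    (hM : ∀ x, Tendsto (fun n => M n x) atTop (𝓝 (N x))) (hcomm : ∀ n, Commute (M n) T) :
    Commute N T := by
  ext x
  refine tendsto_nhds_unique (hM (T x)) ?_
  refine ((T.continuous.tendsto _).comp (hM x)).congr fun n => ?_
  exact (DFunLike.congr_fun (hcomm n).eq x).symm

theorem ae_norm_le_of_tendsto {α E : Type*} {m : MeasurableSpace α} {μ : Measure α}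
    [SeminormedAddCommGroup E] {g : ℕ → α → E} {G : α → E} {C : ℝ}
    (hC : ∀ n, ∀ᵐ x ∂μ, ‖g n x‖ ≤ C) (hlim : ∀ᵐ x ∂μ, Tendsto (fun n => g n x) atTop (𝓝 (G x))) :
    ∀ᵐ x ∂μ, ‖G x‖ ≤ C := by
  filter_upwards [hlim, ae_all_iff.2 hC] with x hx hCx
  exact le_of_tendsto' hx.norm hCx

theorem tendsto_eLpNorm_zero_of_dominated {α E : Type*} {m : MeasurableSpace α} {μ : Measure α}
    [NormedAddCommGroup E] {p : ℝ≥0∞} (hp0 : p ≠ 0) (hp : p ≠ ∞) {f : ℕ → α → E} {F : α → ℝ}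
    (hf : ∀ n, AEStronglyMeasurable (f n) μ) (hF : MemLp F p μ)
    (hbound : ∀ n, ∀ᵐ x ∂μ, ‖f n x‖ ≤ F x)
    (hlim : ∀ᵐ x ∂μ, Tendsto (fun n => f n x) atTop (𝓝 0)) :
    Tendsto (fun n => eLpNorm (f n) p μ) atTop (𝓝 0) := by
  have hp_pos : 0 < p.toReal := ENNReal.toReal_pos hp0 hp
  simp_rw [eLpNorm_eq_lintegral_rpow_enorm_toReal hp0 hp]
  have hint : Tendsto (fun n => ∫⁻ x, ‖f n x‖ₑ ^ p.toReal ∂μ) atTop (𝓝 0) := by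
    have hrpow := ENNReal.continuous_rpow_const (y := p.toReal)
    simpa [ENNReal.zero_rpow_of_pos hp_pos] using
      tendsto_lintegral_of_dominated_convergence' (fun x => ‖F x‖ₑ ^ p.toReal)
        (fun n => (hf n).enorm.pow_const _)
        (fun n => (hbound n).mono fun x hx => ENNReal.rpow_le_rpow
          (enorm_le_iff_norm_le.2 (hx.trans (Real.le_norm_self _))) hp_pos.le)
        (lintegral_rpow_enorm_lt_top_of_eLpNorm_lt_top hp0 hp hF.2).ne
        (hlim.mono fun x hx => (hrpow.tendsto _).comp hx.enorm)
  simpa [Function.comp_def, ENNReal.zero_rpow_of_pos (inv_pos.2 hp_pos)] using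
    ((ENNReal.continuous_rpow_const (y := 1 / p.toReal)).tendsto 0).comp hint

section MulOperator

variable {S : Type*} {mS : MeasurableSpace S} {μ : Measure S} {p : ℝ≥0∞} [Fact (1 ≤ p)]

/-- A relation rather than a function of `g`, so that sums and products of multiplication
operators need no boundedness bookkeeping. -/
def IsMulOperator (μ : Measure S) (g : S → ℂ) (M : Lp ℂ p μ →L[ℂ] Lp ℂ p μ) : Prop :=
  ∀ f : Lp ℂ p μ, (M f : S → ℂ) =ᵐ[μ] fun s => g s * f s

theorem isMulOperator_const (c : ℂ) :
    IsMulOperator μ (fun _ => c) (c • 1 : Lp ℂ p μ →L[ℂ] Lp ℂ p μ) := fun f => by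
  filter_upwards [Lp.coeFn_smul c f] with s e
  simp [e]

theorem exists_isMulOperator {g : S → ℂ} (hg : AEStronglyMeasurable g μ) {C : ℝ}
    (hC : ∀ᵐ s ∂μ, ‖g s‖ ≤ C) : ∃ M : Lp ℂ p μ →L[ℂ] Lp ℂ p μ, IsMulOperator μ g M :=
  ⟨(ContinuousLinearMap.mul ℂ ℂ).holderL μ ∞ p p ((memLp_top_of_bound hg C hC).toLp g),
    fun f => by
      filter_upwards [ContinuousLinearMap.coeFn_holder (ContinuousLinearMap.mul ℂ ℂ) (r := p)
        ((memLp_top_of_bound hg C hC).toLp g) f, MemLp.coeFn_toLp (memLp_top_of_bound hg C hC)]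
        with s e₁ e₂
      simp [e₁, e₂]⟩

namespace IsMulOperator

variable {g g₁ g₂ : S → ℂ} {M M₁ M₂ : Lp ℂ p μ →L[ℂ] Lp ℂ p μ}

theorem unique (h₁ : IsMulOperator μ g M₁) (h₂ : IsMulOperator μ g M₂) : M₁ = M₂ :=
  ContinuousLinearMap.ext fun f => Lp.ext ((h₁ f).trans (h₂ f).symm)

theorem add (h₁ : IsMulOperator μ g₁ M₁) (h₂ : IsMulOperator μ g₂ M₂) :
    IsMulOperator μ (g₁ + g₂) (M₁ + M₂) := fun f => by
  filter_upwards [h₁ f, h₂ f, Lp.coeFn_add (M₁ f) (M₂ f)] with s e₁ e₂ e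
  rw [add_apply, e, Pi.add_apply, e₁, e₂, Pi.add_apply, add_mul]

theorem sub (h₁ : IsMulOperator μ g₁ M₁) (h₂ : IsMulOperator μ g₂ M₂) :
    IsMulOperator μ (g₁ - g₂) (M₁ - M₂) := fun f => by
  filter_upwards [h₁ f, h₂ f, Lp.coeFn_sub (M₁ f) (M₂ f)] with s e₁ e₂ e
  rw [sub_apply, e, Pi.sub_apply, e₁, e₂, Pi.sub_apply, sub_mul]

theorem mul (h₁ : IsMulOperator μ g₁ M₁) (h₂ : IsMulOperator μ g₂ M₂) :
    IsMulOperator μ (g₁ * g₂) (M₁ * M₂) := fun f => by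
  filter_upwards [h₁ (M₂ f), h₂ f] with s e₁ e₂
  simp [e₁, e₂, mul_assoc]

theorem tendsto_apply (hp : p ≠ ∞) {g : ℕ → S → ℂ} {G : S → ℂ}
    {M : ℕ → Lp ℂ p μ →L[ℂ] Lp ℂ p μ} {N : Lp ℂ p μ →L[ℂ] Lp ℂ p μ}
    (hM : ∀ n, IsMulOperator μ (g n) (M n)) (hN : IsMulOperator μ G N) {C : ℝ}
    (hC : ∀ n, ∀ᵐ s ∂μ, ‖g n s‖ ≤ C) (hlim : ∀ᵐ s ∂μ, Tendsto (fun n => g n s) atTop (𝓝 (G s)))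
    (f : Lp ℂ p μ) : Tendsto (fun n => M n f) atTop (𝓝 (N f)) := by
  rw [Lp.tendsto_Lp_iff_tendsto_eLpNorm']
  refine tendsto_eLpNorm_zero_of_dominated (zero_lt_one.trans_le Fact.out).ne' hp
    (fun n => (Lp.aestronglyMeasurable _).sub (Lp.aestronglyMeasurable _))
    ((Lp.memLp f).norm.const_mul (2 * C)) (fun n => ?_) ?_
  · filter_upwards [hM n f, hN f, hC n, ae_norm_le_of_tendsto hC hlim] with s e₁ e₂ h₁ h₂
    rw [Pi.sub_apply, e₁, e₂, ← sub_mul, norm_mul]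
    exact mul_le_mul_of_nonneg_right ((norm_sub_le _ _).trans (by linarith)) (norm_nonneg _)
  · filter_upwards [hlim, ae_all_iff.2 fun n => hM n f, hN f] with s hs e₁ e₂
    simp only [Pi.sub_apply, e₁, e₂, ← sub_mul]
    simpa using (hs.sub_const (G s)).mul_const (f s)

theorem star_eq {M M' : Lp ℂ 2 μ →L[ℂ] Lp ℂ 2 μ} (h : IsMulOperator μ g M)
    (h' : IsMulOperator μ (fun s => conj (g s)) M') : star M = M' := by
  rw [ContinuousLinearMap.star_eq_adjoint, eq_comm, ContinuousLinearMap.eq_adjoint_iff]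
  intro x y
  rw [L2.inner_def, L2.inner_def]
  refine integral_congr_ae ?_
  filter_upwards [h' x, h y] with s e₁ e₂
  simp [e₁, e₂]
  ring

end IsMulOperator

end MulOperator

section Commutant

variable {S : Type*} {mS : MeasurableSpace S} {μ : Measure S} {p : ℝ≥0∞} [Fact (1 ≤ p)]
  (T : Lp ℂ p μ →L[ℂ] Lp ℂ p μ)

def CommutesWithMul (g : S → ℂ) : Prop :=
  ∃ M, IsMulOperator μ g M ∧ Commute M T

theorem commutesWithMul_const (c : ℂ) : CommutesWithMul T (fun _ => c) :=
  ⟨_, isMulOperator_const c, (Commute.one_left T).smul_left c⟩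

namespace CommutesWithMul

variable {T} {g₁ g₂ : S → ℂ}

theorem add (h₁ : CommutesWithMul T g₁) (h₂ : CommutesWithMul T g₂) :
    CommutesWithMul T (g₁ + g₂) :=
  let ⟨_, hM₁, hc₁⟩ := h₁; let ⟨_, hM₂, hc₂⟩ := h₂; ⟨_, hM₁.add hM₂, hc₁.add_left hc₂⟩

theorem sub (h₁ : CommutesWithMul T g₁) (h₂ : CommutesWithMul T g₂) :
    CommutesWithMul T (g₁ - g₂) :=
  let ⟨_, hM₁, hc₁⟩ := h₁; let ⟨_, hM₂, hc₂⟩ := h₂; ⟨_, hM₁.sub hM₂, hc₁.sub_left hc₂⟩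

theorem mul (h₁ : CommutesWithMul T g₁) (h₂ : CommutesWithMul T g₂) :
    CommutesWithMul T (g₁ * g₂) :=
  let ⟨_, hM₁, hc₁⟩ := h₁; let ⟨_, hM₂, hc₂⟩ := h₂; ⟨_, hM₁.mul hM₂, hc₁.mul_left hc₂⟩

theorem of_tendsto (hp : p ≠ ∞) {g : ℕ → S → ℂ} {G : S → ℂ} (hG : AEStronglyMeasurable G μ)
    {C : ℝ} (hC : ∀ n, ∀ᵐ s ∂μ, ‖g n s‖ ≤ C) (hg : ∀ n, CommutesWithMul T (g n))
    (hlim : ∀ᵐ s ∂μ, Tendsto (fun n => g n s) atTop (𝓝 (G s))) : CommutesWithMul T G := by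
  choose M hM hcomm using hg
  obtain ⟨N, hN⟩ := exists_isMulOperator (p := p) hG (ae_norm_le_of_tendsto hC hlim)
  exact ⟨N, hN, ContinuousLinearMap.commute_of_tendsto (hN.tendsto_apply hp hM hC hlim) hcomm⟩

variable {A B : Set S}

theorem indicator_compl (h : CommutesWithMul T (A.indicator 1)) :
    CommutesWithMul T (Aᶜ.indicator 1) := by
  rw [Set.indicator_compl]
  exact (commutesWithMul_const T 1).sub h

theorem indicator_union (hA : CommutesWithMul T (A.indicator 1))
    (hB : CommutesWithMul T (B.indicator 1)) : CommutesWithMul T ((A ∪ B).indicator 1) := by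
  rw [eq_sub_of_add_eq (Set.indicator_union_add_inter (1 : S → ℂ) A B), Set.inter_indicator_one]
  exact (hA.add hB).sub (hA.mul hB)

theorem indicator_iUnion (hp : p ≠ ∞) {F : ℕ → Set S} (hF : ∀ i, MeasurableSet (F i))
    (h : ∀ i, CommutesWithMul T ((F i).indicator 1)) :
    CommutesWithMul T ((⋃ i, F i).indicator 1) := by
  have hacc : ∀ n, CommutesWithMul T ((Set.accumulate F n).indicator 1) := by
    intro n
    induction n with
    | zero => simpa [Set.accumulate_zero_nat] using h 0
    | succ n ih => simpa [Set.accumulate_succ] using ih.indicator_union (h (n + 1))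
  refine of_tendsto hp (measurable_one.indicator (MeasurableSet.iUnion hF)).aestronglyMeasurable
    (C := 1) (fun n => ae_of_all _ fun s => ?_) hacc (ae_of_all _ fun s => ?_)
  · exact (norm_indicator_le_norm_self _ _).trans (by simp)
  · rw [← Set.iUnion_accumulate]
    exact (Monotone.tendsto_indicator _ Set.monotone_accumulate _ s).mono_right (pure_le_nhds _)

theorem indicator_of_measurableSet_generateFrom (hp : p ≠ ∞) {𝒜 : Set (Set S)}
    (h𝒜 : ∀ A ∈ 𝒜, MeasurableSet A ∧ CommutesWithMul T (A.indicator 1))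
    (hA : MeasurableSet[MeasurableSpace.generateFrom 𝒜] A) :
    CommutesWithMul T (A.indicator 1) := by
  suffices MeasurableSet A ∧ CommutesWithMul T (A.indicator 1) from this.2
  induction hA with
  | basic A hA => exact h𝒜 A hA
  | empty => exact ⟨.empty, by simpa using commutesWithMul_const T 0⟩
  | compl A _ ih => exact ⟨ih.1.compl, ih.2.indicator_compl⟩
  | iUnion F _ ih =>
    exact ⟨.iUnion fun i => (ih i).1, indicator_iUnion hp (fun i => (ih i).1) fun i => (ih i).2⟩

theorem of_measurable (hp : p ≠ ∞) {m : MeasurableSpace S} (hm : m ≤ mS)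
    (hind : ∀ A, MeasurableSet[m] A → CommutesWithMul T (A.indicator 1)) {g : S → ℂ}
    (hg : Measurable[m] g) {C : ℝ} (hC : ∀ s, ‖g s‖ ≤ C) : CommutesWithMul T g := by
  have hsimple (φ : @SimpleFunc S m ℂ) : CommutesWithMul T φ := by
    induction φ using @SimpleFunc.induction S ℂ m with
    | @const c A hA =>
      convert (commutesWithMul_const T c).mul (hind A hA) using 1
      ext s
      by_cases hs : s ∈ A <;> simp [hs]
    | add _ hφ hψ => exact hφ.add hψ
  have hgs := hg.stronglyMeasurable
  refine of_tendsto hp (hg.mono hm le_rfl).aestronglyMeasurable (C := max C 0)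
    (fun n => ae_of_all _ (hgs.norm_approxBounded_le (le_max_right C 0) n))
    (fun n => hsimple _) (ae_of_all _ fun s => ?_)
  exact hgs.tendsto_approxBounded_of_norm_le ((hC s).trans (le_max_left C 0))

end CommutesWithMul

end Commutant

section MulOps

variable {S : Type*} {mS : MeasurableSpace S} {μ : Measure S}

theorem mulOps_mono {m m' : MeasurableSpace S} (h : m ≤ m') : mulOps μ m ⊆ mulOps μ m' :=
  fun _ ⟨g, hg, hC, hM⟩ => ⟨g, hg.mono h le_rfl, hC, hM⟩

theorem star_mem_mulOps {m : MeasurableSpace S} (hm : m ≤ mS) {M : Lp ℂ 2 μ →L[ℂ] Lp ℂ 2 μ}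
    (hM : M ∈ mulOps μ m) : star M ∈ mulOps μ m := by
  obtain ⟨g, hg, ⟨C, hC⟩, hM⟩ := hM
  have hg' : Measurable[m] fun s => conj (g s) := Complex.continuous_conj.measurable.comp hg
  have hC' : ∀ s, ‖conj (g s)‖ ≤ C := fun s => by simpa using hC s
  obtain ⟨M', hM'⟩ := exists_isMulOperator (μ := μ) (p := 2)
    (hg'.mono hm le_rfl).aestronglyMeasurable (ae_of_all _ hC')
  exact ⟨_, hg', ⟨C, hC'⟩, (IsMulOperator.star_eq hM hM').symm ▸ hM'⟩

theorem star_mulOps {m : MeasurableSpace S} (hm : m ≤ mS) : star (mulOps μ m) = mulOps μ m :=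
  Set.ext fun M => ⟨fun h => star_star M ▸ star_mem_mulOps hm h, star_mem_mulOps hm⟩

theorem commutesWithMul_indicator_of_mem_centralizer {m : MeasurableSpace S} (hm : m ≤ mS)
    {T : Lp ℂ 2 μ →L[ℂ] Lp ℂ 2 μ} (hT : T ∈ Set.centralizer (mulOps μ m)) {A : Set S}
    (hA : MeasurableSet[m] A) : CommutesWithMul T (A.indicator 1) := by
  have hg : Measurable[m] (A.indicator (1 : S → ℂ)) := measurable_one.indicator hA
  have hC : ∀ s, ‖A.indicator (1 : S → ℂ) s‖ ≤ 1 :=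
    fun s => (norm_indicator_le_norm_self _ _).trans (by simp)
  obtain ⟨M, hM⟩ := exists_isMulOperator (p := 2) (hg.mono hm le_rfl).aestronglyMeasurable
    (ae_of_all μ hC)
  exact ⟨M, hM, hT M ⟨_, hg, ⟨1, hC⟩, hM⟩⟩

theorem centralizer_mulOps_union {m₁ m₂ : MeasurableSpace S} (h₁ : m₁ ≤ mS) (h₂ : m₂ ≤ mS) :
    Set.centralizer (mulOps μ m₁ ∪ mulOps μ m₂) = Set.centralizer (mulOps μ (m₁ ⊔ m₂)) := by
  refine Set.Subset.antisymm ?_ (Set.centralizer_subset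
    (Set.union_subset (mulOps_mono le_sup_left) (mulOps_mono le_sup_right)))
  rintro T hT M ⟨g, hg, ⟨C, hC⟩, hM⟩
  rw [Set.centralizer_union] at hT
  have hind (A : Set S) (hA : MeasurableSet[m₁ ⊔ m₂] A) : CommutesWithMul T (A.indicator 1) :=
    CommutesWithMul.indicator_of_measurableSet_generateFrom ENNReal.ofNat_ne_top
      (fun B hB => hB.elim
        (fun hB => ⟨h₁ B hB, commutesWithMul_indicator_of_mem_centralizer h₁ hT.1 hB⟩)
        (fun hB => ⟨h₂ B hB, commutesWithMul_indicator_of_mem_centralizer h₂ hT.2 hB⟩)) hA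
  obtain ⟨M', hM', hcomm⟩ :=
    CommutesWithMul.of_measurable ENNReal.ofNat_ne_top (sup_le h₁ h₂) hind hg hC
  exact IsMulOperator.unique hM hM' ▸ hcomm

end MulOps

theorem stmt_8_general
    {S : Type*} [mS : MeasurableSpace S] (μ : Measure S)
    (m₁ m₂ : MeasurableSpace S) (h₁ : m₁ ≤ mS) (h₂ : m₂ ≤ mS) :
    vnGen (mulOps μ m₁ ∪ mulOps μ m₂) = vnGen (mulOps μ (m₁ ⊔ m₂)) := by
  unfold vnGen
  rw [StarAlgebra.centralizer_coe_adjoin, StarAlgebra.centralizer_coe_adjoin, Set.union_star,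
    star_mulOps h₁, star_mulOps h₂, star_mulOps (sup_le h₁ h₂), Set.union_self, Set.union_self,
    centralizer_mulOps_union h₁ h₂]

/-- **Lemma 2a13.** `L_∞(Σ₁) ∨ L_∞(Σ₂) = L_∞(Σ₁ ⊔ Σ₂)`: the von Neumann algebra generated
by the multiplication operators by bounded `Σ₁`-measurable and bounded `Σ₂`-measurable
functions equals the von Neumann algebra generated by the multiplication operators by
bounded `(Σ₁ ⊔ Σ₂)`-measurable functions. -/
theorem stmt_8
    {S : Type*} [mS : MeasurableSpace S] (μ : Measure S) [IsFiniteMeasure μ]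
    [TopologicalSpace.SeparableSpace (Lp ℂ 2 μ)]
    (m₁ m₂ : MeasurableSpace S) (h₁ : m₁ ≤ mS) (h₂ : m₂ ≤ mS) :
    vnGen (mulOps μ m₁ ∪ mulOps μ m₂) = vnGen (mulOps μ (m₁ ⊔ m₂)) :=
  stmt_8_general (mS := mS) μ m₁ m₂ h₁ h₂
end

section
/- For x ∈ B let 𝒜_x denote the von Neumann algebra generated by {Q_z : z ∈ B, x ⊔ z = ⊤}. Then for all x, y ∈ B, the von Neumann algebra generated by 𝒜_x ∪ 𝒜_y equals 𝒜_{x⊔y}. -/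
/-!
If `x ⊔ y ⊔ z = ⊤` then `z = (z ⊔ xᶜ) ⊓ (z ⊔ yᶜ)`, so `Q_z = Q_{z ⊔ xᶜ} Q_{z ⊔ yᶜ}` is a product
of a generator of `𝒜_x` and one of `𝒜_y`; conversely every generator of `𝒜_x` or `𝒜_y` is
one of `𝒜_{x ⊔ y}`. The equality follows because `vnGen` is a closure operator whose values
are algebras.
-/

open scoped Pointwise

section StarAlgebra

variable (R : Type*) {A : Type*} [CommSemiring R] [StarRing R] [Semiring A] [StarRing A]
  [Algebra R A] [StarModule R A]

theorem Set.centralizer_coe_starAlgebraAdjoin (s : Set A) :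
    (StarAlgebra.adjoin R s : Set A).centralizer = (s ∪ star s).centralizer := by
  refine subset_antisymm (Set.centralizer_subset ?_) ?_
  · exact Set.union_subset (StarAlgebra.subset_adjoin R s) fun a ha ↦ by
      simpa using star_mem (StarAlgebra.subset_adjoin R s ha)
  · rw [← Set.centralizer_centralizer_centralizer (s ∪ star s),
      ← StarSubalgebra.coe_centralizer_centralizer R]
    exact Set.centralizer_subset (StarAlgebra.adjoin_le_centralizer_centralizer R s)

end StarAlgebra

section VonNeumannGenerated

variable {H : Type*} [NormedAddCommGroup H] [InnerProductSpace ℂ H] [CompleteSpace H]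

theorem vnGen_eq_coe_centralizer_centralizer (s : Set (H →L[ℂ] H)) :
    vnGen s = StarSubalgebra.centralizer ℂ (StarSubalgebra.centralizer ℂ s : Set (H →L[ℂ] H)) := by
  rw [StarSubalgebra.coe_centralizer_centralizer, vnGen, Set.centralizer_coe_starAlgebraAdjoin]

theorem vnGen_mono {s t : Set (H →L[ℂ] H)} (h : s ⊆ t) : vnGen s ⊆ vnGen t := by
  simp only [vnGen_eq_coe_centralizer_centralizer]
  exact StarSubalgebra.centralizer_le _ _ _ (StarSubalgebra.centralizer_le _ _ _ h)

theorem subset_vnGen (s : Set (H →L[ℂ] H)) : s ⊆ vnGen s := by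
  rw [vnGen, Set.centralizer_coe_starAlgebraAdjoin]
  exact Set.subset_union_left.trans Set.subset_centralizer_centralizer

theorem vnGen_vnGen (s : Set (H →L[ℂ] H)) : vnGen (vnGen s) = vnGen s := by
  rw [vnGen, Set.centralizer_coe_starAlgebraAdjoin, vnGen_eq_coe_centralizer_centralizer,
    StarMemClass.star_coe_eq, Set.union_self, StarSubalgebra.coe_centralizer,
    Set.centralizer_centralizer_centralizer]

theorem mul_mem_vnGen {s : Set (H →L[ℂ] H)} {a b : H →L[ℂ] H} (ha : a ∈ vnGen s)
    (hb : b ∈ vnGen s) : a * b ∈ vnGen s := by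
  rw [vnGen_eq_coe_centralizer_centralizer] at *
  exact mul_mem ha hb

noncomputable def vnGenClosure : ClosureOperator (Set (H →L[ℂ] H)) :=
  .mk' vnGen (fun _ _ ↦ vnGen_mono) subset_vnGen fun s ↦ (vnGen_vnGen s).le

theorem vnGen_subset_vnGen_iff {s t : Set (H →L[ℂ] H)} : vnGen s ⊆ vnGen t ↔ s ⊆ vnGen t :=
  (vnGenClosure.le_closure_iff).symm

theorem vnGen_union_vnGen (s t : Set (H →L[ℂ] H)) :
    vnGen (vnGen s ∪ vnGen t) = vnGen (s ∪ t) :=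
  vnGenClosure.closure_sup_closure s t

theorem mul_subset_vnGen_union (s t : Set (H →L[ℂ] H)) : s * t ⊆ vnGen (s ∪ t) :=
  Set.mul_subset_iff.2 fun _ ha _ hb ↦ mul_mem_vnGen
    (subset_vnGen _ (Or.inl ha)) (subset_vnGen _ (Or.inr hb))

end VonNeumannGenerated

section CodisjointGens

theorem exists_codisjoint_codisjoint_inf_eq {α : Type*} [BooleanAlgebra α] {x y z : α}
    (h : Codisjoint (x ⊔ y) z) :
    ∃ u v, Codisjoint x u ∧ Codisjoint y v ∧ u ⊓ v = z := by
  refine ⟨z ⊔ xᶜ, z ⊔ yᶜ, isCompl_compl.codisjoint.mono_right le_sup_right,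
    isCompl_compl.codisjoint.mono_right le_sup_right, ?_⟩
  rw [← sup_inf_left, ← compl_sup, sup_eq_left]
  exact disjoint_compl_left.le_of_codisjoint h

variable {B X : Type*}

def codisjointGens [Lattice B] [OrderTop B] (Q : B → X) (x : B) : Set X :=
  {T | ∃ z : B, x ⊔ z = ⊤ ∧ T = Q z}

theorem codisjointGens_mono [Lattice B] [OrderTop B] (Q : B → X) :
    Monotone (codisjointGens Q) := by
  rintro x x' hx T ⟨z, hz, rfl⟩
  exact ⟨z, top_unique (hz ▸ sup_le_sup_right hx z), rfl⟩

theorem codisjointGens_sup_subset_mul [BooleanAlgebra B] [Mul X] (Q : B → X)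
    (hQ : ∀ u v, Q (u ⊓ v) = Q u * Q v) (x y : B) :
    codisjointGens Q (x ⊔ y) ⊆ codisjointGens Q x * codisjointGens Q y := by
  rintro T ⟨z, hz, rfl⟩
  obtain ⟨u, v, hu, hv, rfl⟩ := exists_codisjoint_codisjoint_inf_eq (codisjoint_iff.2 hz)
  exact ⟨Q u, ⟨u, codisjoint_iff.1 hu, rfl⟩, Q v, ⟨v, codisjoint_iff.1 hv, rfl⟩, (hQ u v).symm⟩

end CodisjointGens

theorem stmt_9_general
    {B : Type*} [BooleanAlgebra B]
    {H : Type*} [NormedAddCommGroup H] [InnerProductSpace ℂ H] [CompleteSpace H]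
    (Q : B → (H →L[ℂ] H))
    (hQ : ∀ x y : B, ∀ ψ : H, Q x (Q y ψ) = Q (x ⊓ y) ψ)
    (𝒜 : B → Set (H →L[ℂ] H))
    (h𝒜 : ∀ x : B, 𝒜 x = vnGen {T | ∃ z : B, x ⊔ z = ⊤ ∧ T = Q z}) :
    ∀ x y : B, vnGen (𝒜 x ∪ 𝒜 y) = 𝒜 (x ⊔ y) := by
  intro x y
  have hQ_inf : ∀ u v, Q (u ⊓ v) = Q u * Q v := fun u v ↦ (ContinuousLinearMap.ext (hQ u v)).symm
  have h𝒜_gens : ∀ x, 𝒜 x = vnGen (codisjointGens Q x) := h𝒜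
  rw [h𝒜_gens, h𝒜_gens, h𝒜_gens, vnGen_union_vnGen]
  refine subset_antisymm (vnGen_mono ?_) (vnGen_subset_vnGen_iff.2 ?_)
  · exact Set.union_subset (codisjointGens_mono Q le_sup_left) (codisjointGens_mono Q le_sup_right)
  · exact (codisjointGens_sup_subset_mul Q hQ_inf x y).trans (mul_subset_vnGen_union _ _)

/-- For `x ∈ B` let `𝒜_x` be the von Neumann algebra generated by
`{Q_z : z ∈ B, x ⊔ z = ⊤}`. Then the von Neumann algebra generated by `𝒜_x ∪ 𝒜_y`
equals `𝒜_{x ⊔ y}`. -/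
theorem stmt_9
    {B : Type*} [BooleanAlgebra B]
    {H : Type*} [NormedAddCommGroup H] [InnerProductSpace ℂ H] [CompleteSpace H]
    (Q : B → (H →L[ℂ] H))
    (hQproj : ∀ x : B, IsSelfAdjoint (Q x))
    (hQidem : ∀ x : B, (Q x).comp (Q x) = Q x)
    (hQ : ∀ x y : B, ∀ ψ : H, Q x (Q y ψ) = Q (x ⊓ y) ψ)
    (𝒜 : B → Set (H →L[ℂ] H))
    (h𝒜 : ∀ x : B, 𝒜 x = vnGen {T | ∃ z : B, x ⊔ z = ⊤ ∧ T = Q z}) :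
    ∀ x y : B, vnGen (𝒜 x ∪ 𝒜 y) = 𝒜 (x ⊔ y) :=
  stmt_9_general Q hQ 𝒜 h𝒜
end

section
/- Assume Assumption (3b2). If F₁ and F₂ are two maps from S to the closed subsets of X that both represent T, then F₁(s) = F₂(s) for μ-almost every s ∈ S. -/
open MeasureTheory TopologicalSpace

/-- A set is regular open if it equals the interior of its closure. -/
def IsRegularOpen {X : Type*} [TopologicalSpace X] (a : Set X) : Prop :=
  interior (closure a) = a

/-!
Both maps give, for almost every `s`, the same answer to every question "is `F s` contained in the
closure of the Boolean complement `(closure a)ᶜ` of `a`?" for `a` in the countable base `A₀`. For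
regular open `a` that closure is `aᶜ`, so the question is whether `F s` misses `a`, and a closed set
is the complement of the union of the basic open sets it misses.
-/

theorem IsRegularOpen.subset_closure_compl_closure_iff {X : Type*} [TopologicalSpace X]
    {a : Set X} (ha : IsRegularOpen a) {E : Set X} :
    E ⊆ closure (closure a)ᶜ ↔ Disjoint E a := by
  rw [closure_compl, ha, Set.subset_compl_iff_disjoint_right]

theorem TopologicalSpace.IsTopologicalBasis.subset_of_forall_disjoint
    {X : Type*} [TopologicalSpace X] {B : Set (Set X)} (hB : IsTopologicalBasis B)
    {E G : Set X} (hE : IsClosed E) (h : ∀ a ∈ B, Disjoint E a → Disjoint G a) : G ⊆ E := by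
  intro x hxG
  by_contra hxE
  obtain ⟨a, haB, hxa, haE⟩ := hB.exists_subset_of_mem_open hxE hE.isOpen_compl
  exact Set.disjoint_left.mp (h a haB (Set.subset_compl_iff_disjoint_left.mp haE)) hxG hxa

theorem TopologicalSpace.IsTopologicalBasis.eq_of_forall_disjoint_iff
    {X : Type*} [TopologicalSpace X] {B : Set (Set X)} (hB : IsTopologicalBasis B)
    {E G : Set X} (hE : IsClosed E) (hG : IsClosed G)
    (h : ∀ a ∈ B, Disjoint E a ↔ Disjoint G a) : E = G :=
  (hB.subset_of_forall_disjoint hG fun a ha => (h a ha).mpr).antisymm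
    (hB.subset_of_forall_disjoint hE fun a ha => (h a ha).mp)

theorem stmt_10_general
    {X S : Type*} [TopologicalSpace X] [MeasurableSpace S]
    (μ : Measure S)
    -- `A` is a Boolean subalgebra of `Reg(X)`
    (A : Set (Set X))
    (hAreg : ∀ a ∈ A, IsRegularOpen a)
    (hAcompl : ∀ a ∈ A, (closure a)ᶜ ∈ A)
    -- `T : A → Σ`, multiplicative mod null sets
    (T : Set X → Set S)
    -- Assumption (3b2): a countable subfamily of `A` is a base of the topology
    (h3b2 : ∃ A₀ ⊆ A, A₀.Countable ∧ IsTopologicalBasis A₀)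
    (F₁ F₂ : S → Set X)
    (hF₁closed : ∀ s, IsClosed (F₁ s)) (hF₂closed : ∀ s, IsClosed (F₂ s))
    (hF₁ : ∀ a ∈ A, ({s | F₁ s ⊆ closure a} : Set S) =ᵐ[μ] T a)
    (hF₂ : ∀ a ∈ A, ({s | F₂ s ⊆ closure a} : Set S) =ᵐ[μ] T a)
    : ∀ᵐ s ∂μ, F₁ s = F₂ s := by
  obtain ⟨A₀, hA₀A, hA₀c, hbasis⟩ := h3b2
  have hdisj : ∀ᵐ s ∂μ, ∀ a ∈ A₀, (Disjoint (F₁ s) a ↔ Disjoint (F₂ s) a) := by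
    rw [ae_ball_iff hA₀c]
    intro a ha
    have hca := hAcompl a (hA₀A ha)
    filter_upwards [(hF₁ _ hca).trans (hF₂ _ hca).symm] with s hs
    simp only [(hAreg a (hA₀A ha)).subset_closure_compl_closure_iff] at hs
    exact eq_iff_iff.mp hs
  filter_upwards [hdisj] with s hs
  exact hbasis.eq_of_forall_disjoint_iff (hF₁closed s) (hF₂closed s) hs

/-- Uniqueness: under Assumption (3b2), two closed-set-valued maps representing `T`
coincide almost everywhere. -/
theorem stmt_10
    {X S : Type*} [TopologicalSpace X] [MeasurableSpace S]
    (μ : Measure S) [IsFiniteMeasure μ]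
    -- `A` is a Boolean subalgebra of `Reg(X)`
    (A : Set (Set X))
    (hAreg : ∀ a ∈ A, IsRegularOpen a)
    (hAbot : (∅ : Set X) ∈ A) (hAtop : (Set.univ : Set X) ∈ A)
    (hAinf : ∀ a ∈ A, ∀ b ∈ A, a ∩ b ∈ A)
    (hAsup : ∀ a ∈ A, ∀ b ∈ A, interior (closure (a ∪ b)) ∈ A)
    (hAcompl : ∀ a ∈ A, (closure a)ᶜ ∈ A)
    -- `T : A → Σ`, multiplicative mod null sets
    (T : Set X → Set S)
    (hTmeas : ∀ a ∈ A, MeasurableSet (T a))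
    (hTinf : ∀ a ∈ A, ∀ b ∈ A, (T (a ∩ b) : Set S) =ᵐ[μ] (T a ∩ T b : Set S))
    -- Assumption (3b2): a countable subfamily of `A` is a base of the topology
    (h3b2 : ∃ A₀ ⊆ A, A₀.Countable ∧ IsTopologicalBasis A₀)
    (F₁ F₂ : S → Set X)
    (hF₁closed : ∀ s, IsClosed (F₁ s)) (hF₂closed : ∀ s, IsClosed (F₂ s))
    (hF₁ : ∀ a ∈ A, ({s | F₁ s ⊆ closure a} : Set S) =ᵐ[μ] T a)
    (hF₂ : ∀ a ∈ A, ({s | F₂ s ⊆ closure a} : Set S) =ᵐ[μ] T a)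
    : ∀ᵐ s ∂μ, F₁ s = F₂ s :=
  stmt_10_general μ A hAreg hAcompl T h3b2 F₁ F₂ hF₁closed hF₂closed hF₁ hF₂
end

section
/- Let F represent T. If there exists an increasing sequence a₁ ≤ a₂ ≤ … in A such that Cl(a_n) is compact for every n and the union ⋃_n T(a_n) coincides with S up to a μ-null set, then F(s) is compact for μ-almost every s ∈ S. -/
/- Almost every `s` lies in some `T(aₙ)`; since `F` represents `T`, for almost every such `s`
we have `F(s) ⊆ Cl(aₙ)`, and a closed subset of the compact set `Cl(aₙ)` is compact. -/

open MeasureTheory TopologicalSpace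

theorem ae_isCompact_of_ae_subset_of_ae_mem_iUnion {X S ι : Type*} [TopologicalSpace X]
    [MeasurableSpace S] [Countable ι] {μ : Measure S} {F : S → Set X}
    (hF : ∀ᵐ s ∂μ, IsClosed (F s)) {K : ι → Set X} (hK : ∀ i, IsCompact (K i))
    {U : ι → Set S} (hU : ∀ᵐ s ∂μ, s ∈ ⋃ i, U i) (hFK : ∀ i, ∀ᵐ s ∂μ, s ∈ U i → F s ⊆ K i) :
    ∀ᵐ s ∂μ, IsCompact (F s) := by
  filter_upwards [hF, hU, ae_all_iff.mpr hFK] with s hFs hs hsub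
  obtain ⟨i, hi⟩ := Set.mem_iUnion.mp hs
  exact (hK i).of_isClosed_subset hFs (hsub i hi)

theorem stmt_13_general
    {X S : Type*} [TopologicalSpace X] [MeasurableSpace S]
    (μ : Measure S)
    -- `A` is a Boolean subalgebra of `Reg(X)`
    (A : Set (Set X))
    -- `T : A → Σ`, multiplicative mod null sets
    (T : Set X → Set S)
    (F : S → Set X) (hFclosed : ∀ s, IsClosed (F s))
    (hF : ∀ a ∈ A, ({s | F s ⊆ closure a} : Set S) =ᵐ[μ] T a)
    (aa : ℕ → Set X) (haaA : ∀ n, aa n ∈ A)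
    (haacpt : ∀ n, IsCompact (closure (aa n)))
    (haaS : ((⋃ n, T (aa n)) : Set S) =ᵐ[μ] (Set.univ : Set S))
    : ∀ᵐ s ∂μ, IsCompact (F s) := by
  refine ae_isCompact_of_ae_subset_of_ae_mem_iUnion (U := fun n => T (aa n))
    (.of_forall hFclosed) haacpt ?_ fun n => ?_
  · filter_upwards [Filter.eventuallyEq_set.mp haaS] with s hs
    exact hs.mpr trivial
  · filter_upwards [Filter.eventuallyEq_set.mp (hF (aa n) (haaA n))] with s hs
    exact hs.mpr

/-- If some increasing sequence `(aₙ)` in `A` has compact closures and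
`⋃ₙ T(aₙ) = S (mod 0)`, then `F(s)` is compact for almost every `s`. -/
theorem stmt_13
    {X S : Type*} [TopologicalSpace X] [MeasurableSpace S]
    (μ : Measure S) [IsFiniteMeasure μ]
    -- `A` is a Boolean subalgebra of `Reg(X)`
    (A : Set (Set X))
    (hAreg : ∀ a ∈ A, IsRegularOpen a)
    (hAbot : (∅ : Set X) ∈ A) (hAtop : (Set.univ : Set X) ∈ A)
    (hAinf : ∀ a ∈ A, ∀ b ∈ A, a ∩ b ∈ A)
    (hAsup : ∀ a ∈ A, ∀ b ∈ A, interior (closure (a ∪ b)) ∈ A)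
    (hAcompl : ∀ a ∈ A, (closure a)ᶜ ∈ A)
    -- `T : A → Σ`, multiplicative mod null sets
    (T : Set X → Set S)
    (hTmeas : ∀ a ∈ A, MeasurableSet (T a))
    (hTinf : ∀ a ∈ A, ∀ b ∈ A, (T (a ∩ b) : Set S) =ᵐ[μ] (T a ∩ T b : Set S))
    (F : S → Set X) (hFclosed : ∀ s, IsClosed (F s))
    (hF : ∀ a ∈ A, ({s | F s ⊆ closure a} : Set S) =ᵐ[μ] T a)
    (aa : ℕ → Set X) (haaA : ∀ n, aa n ∈ A) (haamono : Monotone aa)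
    (haacpt : ∀ n, IsCompact (closure (aa n)))
    (haaS : ((⋃ n, T (aa n)) : Set S) =ᵐ[μ] (Set.univ : Set S))
    : ∀ᵐ s ∂μ, IsCompact (F s) :=
  stmt_13_general μ A T F hFclosed hF aa haaA haacpt haaS
end

section
/- Assume moreover that X is a regular topological space and that Assumption (3b2) holds. Let F represent T, and let r be a regular open subset of X with boundary Bd(r) = Cl(r) ∖ r. If F(s) is compact for μ-almost every s ∈ S and F(s) ∩ Bd(r) = ∅ for μ-almost every s ∈ S, then there exists an increasing sequence b₁ ≤ b₂ ≤ … in A such that Cl(b_n) ∩ Bd(r) = ∅ for every n and the union ⋃_n T(b_n) coincides with S up to a μ-null set. -/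
/-!
Enumerate the basic sets of `A₀` whose closures miss the closed set `Bd(r)`, together with
`∅`, as `f₀, f₁, …`, and let `bₙ = f₀ ∨ ⋯ ∨ fₙ` be their join in `Reg(X)`. The closure of
`bₙ` is the finite union of the closures of the `fᵢ`, so it still misses `Bd(r)`. By
regularity of `X` the `fᵢ` cover `X ∖ Bd(r)`, which contains `F(s)` for a.e. `s`;
compactness then puts `F(s)` inside a single `bₙ`, i.e. `s ∈ T(bₙ)`.
-/

open MeasureTheory TopologicalSpace

open Set

section RegularPartialSup

variable {X : Type*} [TopologicalSpace X]

theorem IsRegularOpen.isOpen {a : Set X} (ha : IsRegularOpen a) : IsOpen a :=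
  ha ▸ isOpen_interior

theorem IsOpen.closure_interior_closure {u : Set X} (hu : IsOpen u) :
    closure (interior (closure u)) = closure u := by
  rw [← hu.interior_eq, closure_interior_idem]

def regularPartialSup (f : ℕ → Set X) : ℕ → Set X
  | 0 => f 0
  | n + 1 => interior (closure (regularPartialSup f n ∪ f (n + 1)))

variable {f : ℕ → Set X}

theorem regularPartialSup_mem {A : Set (Set X)}
    (hA : ∀ a ∈ A, ∀ b ∈ A, interior (closure (a ∪ b)) ∈ A) (hfA : ∀ n, f n ∈ A) :
    ∀ n, regularPartialSup f n ∈ A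
  | 0 => hfA 0
  | n + 1 => hA _ (regularPartialSup_mem hA hfA n) _ (hfA (n + 1))

theorem isOpen_regularPartialSup (hf : ∀ n, IsOpen (f n)) :
    ∀ n, IsOpen (regularPartialSup f n)
  | 0 => hf 0
  | _ + 1 => isOpen_interior

theorem union_subset_regularPartialSup_succ (hf : ∀ n, IsOpen (f n)) (n : ℕ) :
    regularPartialSup f n ∪ f (n + 1) ⊆ regularPartialSup f (n + 1) :=
  ((isOpen_regularPartialSup hf n).union (hf (n + 1))).subset_interior_closure

theorem monotone_regularPartialSup (hf : ∀ n, IsOpen (f n)) :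
    Monotone (regularPartialSup f) :=
  monotone_nat_of_le_succ fun n =>
    subset_union_left.trans (union_subset_regularPartialSup_succ hf n)

theorem subset_regularPartialSup (hf : ∀ n, IsOpen (f n)) :
    ∀ n, f n ⊆ regularPartialSup f n
  | 0 => subset_rfl
  | n + 1 => subset_union_right.trans (union_subset_regularPartialSup_succ hf n)

theorem closure_regularPartialSup_succ (hf : ∀ n, IsOpen (f n)) (n : ℕ) :
    closure (regularPartialSup f (n + 1)) =
      closure (regularPartialSup f n) ∪ closure (f (n + 1)) := by
  rw [regularPartialSup,
    ((isOpen_regularPartialSup hf n).union (hf (n + 1))).closure_interior_closure, closure_union]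

theorem disjoint_closure_regularPartialSup (hf : ∀ n, IsOpen (f n)) {K : Set X}
    (hfK : ∀ n, Disjoint (closure (f n)) K) : ∀ n, Disjoint (closure (regularPartialSup f n)) K
  | 0 => hfK 0
  | n + 1 => by
    rw [closure_regularPartialSup_succ hf]
    exact (disjoint_closure_regularPartialSup hf hfK n).union_left (hfK (n + 1))

theorem IsCompact.exists_subset_regularPartialSup (hf : ∀ n, IsOpen (f n)) {K : Set X}
    (hK : IsCompact K) (hKf : K ⊆ ⋃ n, f n) : ∃ n, K ⊆ regularPartialSup f n :=
  hK.elim_directed_cover _ (isOpen_regularPartialSup hf)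
    (hKf.trans (iUnion_mono (subset_regularPartialSup hf)))
    (monotone_regularPartialSup hf).directed_le

end RegularPartialSup

theorem TopologicalSpace.IsTopologicalBasis.exists_seq_closure_disjoint_cover
    {X : Type*} [TopologicalSpace X] [RegularSpace X] {B : Set (Set X)}
    (hB : IsTopologicalBasis B) (hBc : B.Countable) (hB₀ : ∅ ∈ B) {K : Set X}
    (hK : IsClosed K) :
    ∃ f : ℕ → Set X, (∀ n, f n ∈ B) ∧ (∀ n, Disjoint (closure (f n)) K) ∧
      Kᶜ ⊆ ⋃ n, f n := by
  obtain ⟨f, hf⟩ := (hBc.mono (sep_subset B fun a => Disjoint (closure a) K)).exists_eq_range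
    ⟨∅, hB₀, by simp⟩
  have hfB : ∀ n, f n ∈ {a ∈ B | Disjoint (closure a) K} := fun n => hf ▸ mem_range_self n
  refine ⟨f, fun n => (hfB n).1, fun n => (hfB n).2, fun x hx => ?_⟩
  obtain ⟨a, haB, hxa, haK⟩ := hB.exists_closure_subset (hK.isOpen_compl.mem_nhds hx)
  obtain ⟨n, rfl⟩ : a ∈ range f := hf ▸ ⟨haB, subset_compl_iff_disjoint_right.1 haK⟩
  exact mem_iUnion.2 ⟨n, hxa⟩

theorem stmt_15_general
    {X S : Type*} [TopologicalSpace X] [MeasurableSpace S]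
    (μ : Measure S)
    -- `A` is a Boolean subalgebra of `Reg(X)`
    (A : Set (Set X))
    (hAreg : ∀ a ∈ A, IsRegularOpen a)
    (hAbot : (∅ : Set X) ∈ A)
    (hAsup : ∀ a ∈ A, ∀ b ∈ A, interior (closure (a ∪ b)) ∈ A)
    -- `T : A → Σ`, multiplicative mod null sets
    (T : Set X → Set S)
    [RegularSpace X]
    -- Assumption (3b2): a countable subfamily of `A` is a base of the topology
    (h3b2 : ∃ A₀ ⊆ A, A₀.Countable ∧ IsTopologicalBasis A₀)
    (F : S → Set X)
    (hF : ∀ a ∈ A, ({s | F s ⊆ closure a} : Set S) =ᵐ[μ] T a)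
    (r : Set X) (hr : IsRegularOpen r)
    (hFcpt : ∀ᵐ s ∂μ, IsCompact (F s))
    (hFbd : ∀ᵐ s ∂μ, F s ∩ (closure r \ r) = ∅)
    : ∃ bb : ℕ → Set X, Monotone bb ∧ (∀ n, bb n ∈ A) ∧
      (∀ n, closure (bb n) ∩ (closure r \ r) = ∅) ∧
      ((⋃ n, T (bb n)) : Set S) =ᵐ[μ] (Set.univ : Set S) := by
  obtain ⟨A₀, hA₀A, hA₀c, hA₀b⟩ := h3b2
  obtain ⟨f, hfA₀, hfBd, hcover⟩ := hA₀b.insert_empty.exists_seq_closure_disjoint_cover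
    (hA₀c.insert ∅) (mem_insert ∅ A₀) (isClosed_closure.sdiff hr.isOpen)
  have hfA : ∀ n, f n ∈ A := fun n => insert_subset hAbot hA₀A (hfA₀ n)
  have hfo : ∀ n, IsOpen (f n) := fun n => (hAreg _ (hfA n)).isOpen
  have hbA := regularPartialSup_mem hAsup hfA
  refine ⟨regularPartialSup f, monotone_regularPartialSup hfo, hbA,
    fun n => (disjoint_closure_regularPartialSup hfo hfBd n).inter_eq, ?_⟩
  have hT : ∀ᵐ s ∂μ, ∀ n,
      F s ⊆ closure (regularPartialSup f n) → s ∈ T (regularPartialSup f n) :=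
    ae_all_iff.2 fun n => (hF _ (hbA n)).mem_iff.mono fun _ hs => hs.1
  refine Filter.eventuallyEq_univ.2 ?_
  filter_upwards [hT, hFcpt, hFbd] with s hTs hcpt hbd
  obtain ⟨n, hn⟩ := hcpt.exists_subset_regularPartialSup hfo
    ((subset_compl_iff_disjoint_right.2 (disjoint_iff_inter_eq_empty.2 hbd)).trans hcover)
  exact mem_iUnion.2 ⟨n, hTs n (hn.trans subset_closure)⟩

/-- **Proposition 3b9(b).** If `X` is regular, Assumption (3b2) holds, `F(s)` is compact
a.e. and avoids the boundary of a regular open set `r` a.e., then there is an increasing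
sequence `(bₙ)` in `A` with closures disjoint from the boundary and `⋃ₙ T(bₙ) = S (mod 0)`. -/
theorem stmt_15
    {X S : Type*} [TopologicalSpace X] [MeasurableSpace S]
    (μ : Measure S) [IsFiniteMeasure μ]
    -- `A` is a Boolean subalgebra of `Reg(X)`
    (A : Set (Set X))
    (hAreg : ∀ a ∈ A, IsRegularOpen a)
    (hAbot : (∅ : Set X) ∈ A) (hAtop : (Set.univ : Set X) ∈ A)
    (hAinf : ∀ a ∈ A, ∀ b ∈ A, a ∩ b ∈ A)
    (hAsup : ∀ a ∈ A, ∀ b ∈ A, interior (closure (a ∪ b)) ∈ A)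
    (hAcompl : ∀ a ∈ A, (closure a)ᶜ ∈ A)
    -- `T : A → Σ`, multiplicative mod null sets
    (T : Set X → Set S)
    (hTmeas : ∀ a ∈ A, MeasurableSet (T a))
    (hTinf : ∀ a ∈ A, ∀ b ∈ A, (T (a ∩ b) : Set S) =ᵐ[μ] (T a ∩ T b : Set S))
    [RegularSpace X]
    -- Assumption (3b2): a countable subfamily of `A` is a base of the topology
    (h3b2 : ∃ A₀ ⊆ A, A₀.Countable ∧ IsTopologicalBasis A₀)
    (F : S → Set X) (hFclosed : ∀ s, IsClosed (F s))
    (hF : ∀ a ∈ A, ({s | F s ⊆ closure a} : Set S) =ᵐ[μ] T a)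
    (r : Set X) (hr : IsRegularOpen r)
    (hFcpt : ∀ᵐ s ∂μ, IsCompact (F s))
    (hFbd : ∀ᵐ s ∂μ, F s ∩ (closure r \ r) = ∅)
    : ∃ bb : ℕ → Set X, Monotone bb ∧ (∀ n, bb n ∈ A) ∧
      (∀ n, closure (bb n) ∩ (closure r \ r) = ∅) ∧
      ((⋃ n, T (bb n)) : Set S) =ᵐ[μ] (Set.univ : Set S) :=
  stmt_15_general μ A hAreg hAbot hAsup T h3b2 F hF r hr hFcpt hFbd
end
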